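/- Let p ≥ 3, 0 ≤ k ≤ p and 1 ≤ i ≤ p be integers. Then in ℤ[t]: Σ_{x ∈ M_p^k, x_i = p} t^{sep_p^k(y_p, x)} equals t^{i−1} · ζ_{p−1}^{k}(t) if i ≤ p − k, and equals t^{i−1} · ζ_{p−1}^{k−1}(t) if i > p − k. -/

import Mathlib

open Polynomial Finset

/-- The set `M_p^k` of representative integer points for the regions of `𝒟_p^k`:
points with entries in `{±1, …, ±p}`, pairwise distinct absolute values, and
`x i ≠ -1` for the first `p - k` coordinates. -/
noncomputable def Mfin (p k : ℕ) : Finset (Fin p → ℤ) :=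
  (Fintype.piFinset fun _ : Fin p => Finset.Icc (-(p : ℤ)) (p : ℤ)).filter
    fun x => (∀ i, x i ≠ 0) ∧ (∀ i j, i ≠ j → |x i| ≠ |x j|) ∧
      ∀ i : Fin p, (i : ℕ) < p - k → x i ≠ -1

/-- The number of hyperplanes of `𝒟_p^k` separating `u` and `v`, for `u, v` on
none of the hyperplanes: hyperplanes `ker (x_i - x_j)` and `ker (x_i + x_j)` for
`i < j`, and `ker x_i` for the last `k` coordinates. -/
noncomputable def sep (p k : ℕ) (u v : Fin p → ℝ) : ℕ :=
  (Finset.univ.filter fun q : Fin p × Fin p =>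
      q.1 < q.2 ∧ (u q.1 - u q.2) * (v q.1 - v q.2) < 0).card +
  (Finset.univ.filter fun q : Fin p × Fin p =>
      q.1 < q.2 ∧ (u q.1 + u q.2) * (v q.1 + v q.2) < 0).card +
  (Finset.univ.filter fun i : Fin p => p - k ≤ (i : ℕ) ∧ u i * v i < 0).card

/-- Coercion of an integer point to a real point. -/
def toR {p : ℕ} (x : Fin p → ℤ) : Fin p → ℝ := fun i => (x i : ℝ)

/-- The base point `y_p = (p, p-1, …, 1)`. -/
noncomputable def ypt (p : ℕ) : Fin p → ℝ := fun i => (p : ℝ) - (i : ℝ)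

/-- The rank-generating function of the poset of regions of `𝒟_p^k` with respect
to the region of `y_p`. -/
noncomputable def zeta (p k : ℕ) : Polynomial ℤ :=
  ∑ x ∈ Mfin p k, Polynomial.X ^ sep p k (ypt p) (toR x)

/-- `F e = 1 + t + ⋯ + t^e`. -/
noncomputable def Fpoly (e : ℕ) : Polynomial ℤ :=
  ∑ j ∈ Finset.range (e + 1), Polynomial.X ^ j

/-- The hyperplanes of the arrangement `𝒟_p^k` in `ℝ^p`. -/
def hyps (p k : ℕ) : Set (Set (Fin p → ℝ)) :=
  {H | (∃ i j : Fin p, i < j ∧ H = {x | x i - x j = 0}) ∨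
       (∃ i j : Fin p, i < j ∧ H = {x | x i + x j = 0}) ∨
       (∃ i : Fin p, p - k ≤ (i : ℕ) ∧ H = {x | x i = 0})}

/-- The complement of the union of the hyperplanes of `𝒟_p^k`. -/
def comp (p k : ℕ) : Set (Fin p → ℝ) := (⋃ H ∈ hyps p k, H)ᶜ

/-- Deletion of the `i`-th coordinate. -/
def deleteCoord {p : ℕ} (i : Fin p) (x : Fin p → ℤ) : Fin (p - 1) → ℤ :=
  fun j =>
    if (j : ℕ) < (i : ℕ) then x ⟨j, by have := j.isLt; omega⟩
    else x ⟨(j : ℕ) + 1, by have := j.isLt; omega⟩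


section Aux

lemma succAbove_val {n : ℕ} (i : Fin (n+1)) (a : Fin n) :
    (i.succAbove a : ℕ) = if (a:ℕ) < (i:ℕ) then (a:ℕ) else (a:ℕ)+1 := by
  rcases lt_or_ge ((a.castSucc : Fin (n+1)) : ℕ) (i:ℕ) with h|h
  · rw [Fin.succAbove_of_castSucc_lt _ _ (by exact Fin.lt_def.mpr h)]
    simp at h; rw [if_pos h]; simp
  · rw [Fin.succAbove_of_le_castSucc _ _ (by exact Fin.le_def.mpr h)]
    simp at h; rw [if_neg (by omega)]; simp

lemma card_filter_lt_fin {n : ℕ} (m : ℕ) (h : m ≤ n) :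
    ((univ : Finset (Fin n)).filter fun a : Fin n => (a:ℕ) < m).card = m := by
  have heq : ((univ : Finset (Fin n)).filter fun a : Fin n => (a:ℕ) < m) =
      (Finset.range m).attachFin (fun x hx => lt_of_lt_of_le (Finset.mem_range.mp hx) h) := by
    ext a
    simp [Finset.mem_attachFin]
  rw [heq, Finset.card_attachFin, Finset.card_range]

noncomputable def sepZ (p k : ℕ) (x : Fin p → ℤ) : ℕ :=
  (Finset.univ.filter fun q : Fin p × Fin p => q.1 < q.2 ∧ x q.1 < x q.2).card +
  (Finset.univ.filter fun q : Fin p × Fin p => q.1 < q.2 ∧ x q.1 + x q.2 < 0).card +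
  (Finset.univ.filter fun i : Fin p => p - k ≤ (i : ℕ) ∧ x i < 0).card

lemma pos_mul_neg_iff {a b : ℝ} (ha : 0 < a) : a * b < 0 ↔ b < 0 := by
  constructor
  · intro h; nlinarith
  · intro h; exact mul_neg_of_pos_of_neg ha h

lemma sep_eq_sepZ (p k : ℕ) (x : Fin p → ℤ) :
    sep p k (ypt p) (toR x) = sepZ p k x := by
  have hcast : ∀ j : Fin p, ((j:ℕ):ℝ) < (p:ℝ) := by
    intro j; exact_mod_cast j.isLt
  unfold sep sepZ ypt toR
  congr 2
  · refine congrArg Finset.card ?_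
    ext q
    simp only [Finset.mem_filter, Finset.mem_univ, true_and]
    have hiff : ∀ h1 : q.1 < q.2,
        (((p:ℝ) - (q.1:ℕ)) - ((p:ℝ) - (q.2:ℕ))) * ((x q.1 : ℝ) - (x q.2 : ℝ)) < 0 ↔
          x q.1 < x q.2 := by
      intro h1
      have hpos : (0:ℝ) < ((p:ℝ) - (q.1:ℕ)) - ((p:ℝ) - (q.2:ℕ)) := by
        have : ((q.1:ℕ):ℝ) < ((q.2:ℕ):ℝ) := by exact_mod_cast Fin.lt_def.mp h1
        linarith
      rw [pos_mul_neg_iff hpos, sub_neg]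
      exact Iff.symm (by exact_mod_cast Iff.rfl)
    constructor
    · rintro ⟨h1, h2⟩; exact ⟨h1, (hiff h1).mp h2⟩
    · rintro ⟨h1, h2⟩; exact ⟨h1, (hiff h1).mpr h2⟩
  · refine congrArg Finset.card ?_
    ext q
    simp only [Finset.mem_filter, Finset.mem_univ, true_and]
    have hpos : (0:ℝ) < ((p:ℝ) - (q.1:ℕ)) + ((p:ℝ) - (q.2:ℕ)) := by
      have h1 := hcast q.1; have h2 := hcast q.2; linarith
    have hiff : (((p:ℝ) - (q.1:ℕ)) + ((p:ℝ) - (q.2:ℕ))) * ((x q.1 : ℝ) + (x q.2 : ℝ)) < 0 ↔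
        x q.1 + x q.2 < 0 := by
      rw [pos_mul_neg_iff hpos]
      constructor
      · intro h; exact_mod_cast h
      · intro h; exact_mod_cast h
    constructor
    · rintro ⟨h1, h2⟩; exact ⟨h1, hiff.mp h2⟩
    · rintro ⟨h1, h2⟩; exact ⟨h1, hiff.mpr h2⟩
  · ext j
    simp only [Finset.mem_filter, Finset.mem_univ, true_and]
    have hpos : (0:ℝ) < (p:ℝ) - (j:ℕ) := by have := hcast j; linarith
    have hiff : ((p:ℝ) - (j:ℕ)) * (x j : ℝ) < 0 ↔ x j < 0 := by
      rw [pos_mul_neg_iff hpos]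
      constructor
      · intro h; exact_mod_cast h
      · intro h; exact_mod_cast h
    constructor
    · rintro ⟨h1, h2⟩; exact ⟨h1, hiff.mp h2⟩
    · rintro ⟨h1, h2⟩; exact ⟨h1, hiff.mpr h2⟩

lemma sepZ_succAbove (n k k' : ℕ) (i : Fin (n+1)) (x : Fin (n+1) → ℤ)
    (hxi : x i = (n:ℤ)+1)
    (hb : ∀ j : Fin n, |x (i.succAbove j)| ≤ (n:ℤ))
    (hth : ∀ j : Fin n, (n - k' ≤ (j:ℕ)) ↔ ((n+1) - k ≤ (i.succAbove j : ℕ))) :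
    sepZ (n+1) k x = (i:ℕ) + sepZ n k' (fun j => x (i.succAbove j)) := by
  classical
  have hble : ∀ j : Fin n, x (i.succAbove j) ≤ (n:ℤ) ∧ -(n:ℤ) ≤ x (i.succAbove j) := by
    intro j; have := abs_le.mp (hb j); exact ⟨this.2, this.1⟩
  have hlt : ∀ a b : Fin n, i.succAbove a < i.succAbove b ↔ a < b := by
    intro a b; exact Fin.succAbove_lt_succAbove_iff
  have hsai : ∀ a : Fin n, (i.succAbove a < i) ↔ (a:ℕ) < (i:ℕ) := by
    intro a; rw [Fin.lt_def, succAbove_val]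
    split_ifs with h <;> omega
  have hilt : ∀ b : Fin n, ¬ (x i < x (i.succAbove b)) := by
    intro b h; have := (hble b).1; omega
  have c1 : (Finset.univ.filter fun q : Fin (n+1) × Fin (n+1) =>
        q.1 < q.2 ∧ x q.1 < x q.2).card
      = (i:ℕ) + (Finset.univ.filter fun q : Fin n × Fin n =>
        q.1 < q.2 ∧ x (i.succAbove q.1) < x (i.succAbove q.2)).card := by
    rw [Finset.card_filter, Finset.card_filter, Fintype.sum_prod_type, Fintype.sum_prod_type]
    rw [Fin.sum_univ_succAbove
      (fun a => ∑ b, if a < b ∧ x a < x b then 1 else 0) i]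
    have e1 : (∑ b, if i < b ∧ x i < x b then (1:ℕ) else 0) = 0 := by
      apply Finset.sum_eq_zero
      intro b _
      rw [if_neg]
      rintro ⟨h1, h2⟩
      obtain ⟨a, rfl⟩ := Fin.exists_succAbove_eq h1.ne'
      exact hilt a h2
    have e2 : ∀ a : Fin n,
        (∑ b, if i.succAbove a < b ∧ x (i.succAbove a) < x b then (1:ℕ) else 0)
        = (if (a:ℕ) < (i:ℕ) then 1 else 0)
          + ∑ b : Fin n, (if a < b ∧ x (i.succAbove a) < x (i.succAbove b) then 1 else 0) := by
      intro a
      rw [Fin.sum_univ_succAbove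
        (fun b => if i.succAbove a < b ∧ x (i.succAbove a) < x b then (1:ℕ) else 0) i]
      congr 1
      · have hx : x (i.succAbove a) < x i := by
          rw [hxi]; have := (hble a).1; omega
        simp only [hx, and_true]
        exact if_congr (hsai a) rfl rfl
      · apply Finset.sum_congr rfl
        intro b _
        exact if_congr (and_congr (hlt a b) Iff.rfl) rfl rfl
    rw [e1, Finset.sum_congr rfl (fun a _ => e2 a), Finset.sum_add_distrib]
    have e3 : (∑ a : Fin n, if (a:ℕ) < (i:ℕ) then (1:ℕ) else 0) = (i:ℕ) := by
      rw [← Finset.card_filter]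
      exact card_filter_lt_fin (i:ℕ) (by omega)
    rw [e3]
    simp
  have c2 : (Finset.univ.filter fun q : Fin (n+1) × Fin (n+1) =>
        q.1 < q.2 ∧ x q.1 + x q.2 < 0).card
      = (Finset.univ.filter fun q : Fin n × Fin n =>
        q.1 < q.2 ∧ x (i.succAbove q.1) + x (i.succAbove q.2) < 0).card := by
    rw [Finset.card_filter, Finset.card_filter, Fintype.sum_prod_type, Fintype.sum_prod_type]
    rw [Fin.sum_univ_succAbove
      (fun a => ∑ b, if a < b ∧ x a + x b < 0 then 1 else 0) i]
    have e1 : (∑ b, if i < b ∧ x i + x b < 0 then (1:ℕ) else 0) = 0 := by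
      apply Finset.sum_eq_zero
      intro b _
      rw [if_neg]
      rintro ⟨h1, h2⟩
      obtain ⟨a, rfl⟩ := Fin.exists_succAbove_eq h1.ne'
      have := (hble a).2; omega
    have e2 : ∀ a : Fin n,
        (∑ b, if i.succAbove a < b ∧ x (i.succAbove a) + x b < 0 then (1:ℕ) else 0)
        = ∑ b : Fin n, (if a < b ∧ x (i.succAbove a) + x (i.succAbove b) < 0 then 1 else 0) := by
      intro a
      rw [Fin.sum_univ_succAbove
        (fun b => if i.succAbove a < b ∧ x (i.succAbove a) + x b < 0 then (1:ℕ) else 0) i]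
      have h0 : (if i.succAbove a < i ∧ x (i.succAbove a) + x i < 0 then (1:ℕ) else 0) = 0 := by
        rw [if_neg]
        rintro ⟨h1, h2⟩
        rw [hxi] at h2
        have := (hble a).2; omega
      rw [h0, zero_add]
      apply Finset.sum_congr rfl
      intro b _
      exact if_congr (and_congr (hlt a b) Iff.rfl) rfl rfl
    rw [e1, Finset.sum_congr rfl (fun a _ => e2 a)]
    simp
  have c3 : (Finset.univ.filter fun j : Fin (n+1) => (n+1) - k ≤ (j : ℕ) ∧ x j < 0).card
      = (Finset.univ.filter fun j : Fin n => n - k' ≤ (j : ℕ)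
          ∧ x (i.succAbove j) < 0).card := by
    rw [Finset.card_filter, Finset.card_filter]
    rw [Fin.sum_univ_succAbove
      (fun j => if (n+1) - k ≤ (j : ℕ) ∧ x j < 0 then (1:ℕ) else 0) i]
    have h0 : (if (n+1) - k ≤ (i : ℕ) ∧ x i < 0 then (1:ℕ) else 0) = 0 := by
      rw [if_neg]; rintro ⟨_, h2⟩; omega
    rw [h0, zero_add]
    apply Finset.sum_congr rfl
    intro j _
    exact if_congr (and_congr (hth j).symm Iff.rfl) rfl rfl
  unfold sepZ
  beta_reduce
  omega

lemma mem_Mfin_iff {p k : ℕ} (x : Fin p → ℤ) :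
    x ∈ Mfin p k ↔ (∀ j, |x j| ≤ (p:ℤ)) ∧ (∀ j, x j ≠ 0) ∧
      (∀ a b, a ≠ b → |x a| ≠ |x b|) ∧ (∀ j : Fin p, (j:ℕ) < p - k → x j ≠ -1) := by
  unfold Mfin
  rw [Finset.mem_filter, Fintype.mem_piFinset]
  simp only [Finset.mem_Icc, ← abs_le, and_assoc]

lemma key_lemma (n k k' : ℕ) (i : Fin (n+1))
    (hth : ∀ j : Fin n, (n - k' ≤ (j:ℕ)) ↔ ((n+1) - k ≤ (i.succAbove j : ℕ))) :
    ∑ x ∈ (Mfin (n+1) k).filter (fun x => x i = ((n+1 : ℕ) : ℤ)),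
        (Polynomial.X : Polynomial ℤ) ^ sep (n+1) k (ypt (n+1)) (toR x)
      = Polynomial.X ^ (i:ℕ) * zeta n k' := by
  classical
  have hth2 : ∀ j : Fin n, ((j:ℕ) < n - k') ↔ ((i.succAbove j : ℕ) < (n+1) - k) := by
    intro j
    have := hth j
    omega
  rw [zeta, Finset.mul_sum]
  refine Finset.sum_nbij' (fun x => fun j => x (i.succAbove j))
    (fun x' => (i.insertNth (((n:ℤ))+1) x' : Fin (n+1) → ℤ)) ?_ ?_ ?_ ?_ ?_
  · intro x hx
    beta_reduce
    rw [Finset.mem_filter, mem_Mfin_iff] at hx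
    obtain ⟨⟨hb, hnz, hd, hm1⟩, hxi⟩ := hx
    rw [mem_Mfin_iff]
    refine ⟨?_, fun j => hnz _, ?_, ?_⟩
    · intro j
      have h1 := hb (i.succAbove j)
      have h2 : |x (i.succAbove j)| ≠ |x i| := hd _ _ (Fin.succAbove_ne i j)
      rw [hxi] at h2
      have h3 : |(((n+1:ℕ)):ℤ)| = ((n+1:ℕ):ℤ) := abs_of_nonneg (by positivity)
      rw [h3] at h2
      have := abs_nonneg (x (i.succAbove j))
      push_cast at h1 h2 ⊢
      omega
    · intro a b hab
      exact hd _ _ (fun h => hab (Fin.succAbove_right_injective h))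
    · intro j hj
      apply hm1
      rw [← hth2 j] ; exact hj
  · intro x' hx'
    beta_reduce
    rw [mem_Mfin_iff] at hx'
    obtain ⟨hb, hnz, hd, hm1⟩ := hx'
    rw [Finset.mem_filter, mem_Mfin_iff]
    have happ : ∀ j : Fin n,
        (i.insertNth ((n:ℤ)+1) x' : Fin (n+1) → ℤ) (i.succAbove j) = x' j := by
      intro j; simp
    have happs : (i.insertNth ((n:ℤ)+1) x' : Fin (n+1) → ℤ) i = (n:ℤ)+1 := by simp
    have hcases : ∀ a : Fin (n+1), a = i ∨ ∃ j : Fin n, a = i.succAbove j := by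
      intro a
      by_cases h : a = i
      · exact Or.inl h
      · obtain ⟨j, hj⟩ := Fin.exists_succAbove_eq h
        exact Or.inr ⟨j, hj.symm⟩
    refine ⟨⟨?_, ?_, ?_, ?_⟩, ?_⟩
    · intro a
      rcases hcases a with rfl | ⟨j, rfl⟩
      · rw [happs]; rw [abs_of_nonneg (by positivity)]; push_cast; omega
      · rw [happ]; have := hb j; push_cast; push_cast at this; omega
    · intro a
      rcases hcases a with rfl | ⟨j, rfl⟩
      · rw [happs]; positivity
      · rw [happ]; exact hnz j
    · intro a b hab
      rcases hcases a with rfl | ⟨j, rfl⟩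
      · rcases hcases b with rfl | ⟨j', rfl⟩
        · exact absurd rfl hab
        · rw [happs, happ, abs_of_nonneg (by positivity : (0:ℤ) ≤ (n:ℤ)+1)]
          have := hb j'
          omega
      · rcases hcases b with rfl | ⟨j', rfl⟩
        · rw [happs, happ, abs_of_nonneg (by positivity : (0:ℤ) ≤ (n:ℤ)+1)]
          have := hb j
          omega
        · rw [happ, happ]
          apply hd
          intro h; exact hab (by rw [h])
    · intro a ha
      rcases hcases a with rfl | ⟨j, rfl⟩
      · rw [happs]; omega
      · rw [happ]
        apply hm1
        rw [hth2 j]; exact ha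
    · rw [happs]; push_cast; ring
  · intro x hx
    beta_reduce
    rw [Finset.mem_filter] at hx
    funext a
    rcases (by
      by_cases h : a = i
      · exact Or.inl h
      · obtain ⟨j, hj⟩ := Fin.exists_succAbove_eq h
        exact Or.inr ⟨j, hj.symm⟩ : a = i ∨ ∃ j : Fin n, a = i.succAbove j) with rfl | ⟨j, rfl⟩
    · simp only [Fin.insertNth_apply_same]
      rw [hx.2]; push_cast; ring
    · simp
  · intro x' _
    beta_reduce
    funext j
    simp
  · intro x hx
    beta_reduce
    rw [Finset.mem_filter, mem_Mfin_iff] at hx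
    obtain ⟨⟨hb, hnz, hd, hm1⟩, hxi⟩ := hx
    have hxi' : x i = (n:ℤ)+1 := by rw [hxi]; push_cast; ring
    have hbnd : ∀ j : Fin n, |x (i.succAbove j)| ≤ (n:ℤ) := by
      intro j
      have h1 := hb (i.succAbove j)
      have h2 : |x (i.succAbove j)| ≠ |x i| := hd _ _ (Fin.succAbove_ne i j)
      rw [hxi'] at h2
      have h3 : |(n:ℤ)+1| = (n:ℤ)+1 := abs_of_nonneg (by positivity)
      rw [h3] at h2
      have := abs_nonneg (x (i.succAbove j))
      push_cast at h1
      omega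
    rw [sep_eq_sepZ, sep_eq_sepZ, sepZ_succAbove n k k' i x hxi' hbnd hth, pow_add]

end Aux

/-- for `p ≥ 3`, `0 ≤ k ≤ p` and a (0-indexed) coordinate `i`,
the partial sum of `ζ_p^k` over the points of `M_p^k` with `x_i = p` equals
`t^{i} ⋅ ζ_{p-1}^{k}(t)` if `i < p - k` (1-indexed: `i ≤ p - k`), and
`t^{i} ⋅ ζ_{p-1}^{k-1}(t)` if `i ≥ p - k` (1-indexed: `i > p - k`). -/
theorem partial_sum_xi_eq_p (p k : ℕ) (hp : 3 ≤ p) (hk : k ≤ p) (i : Fin p) :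
    ((i : ℕ) < p - k →
      ∑ x ∈ (Mfin p k).filter (fun x => x i = (p : ℤ)),
          (Polynomial.X : Polynomial ℤ) ^ sep p k (ypt p) (toR x)
        = Polynomial.X ^ (i : ℕ) * zeta (p - 1) k) ∧
    (p - k ≤ (i : ℕ) →
      ∑ x ∈ (Mfin p k).filter (fun x => x i = (p : ℤ)),
          (Polynomial.X : Polynomial ℤ) ^ sep p k (ypt p) (toR x)
        = Polynomial.X ^ (i : ℕ) * zeta (p - 1) (k - 1)) := by
  obtain ⟨n, rfl⟩ : ∃ n, p = n + 1 := ⟨p - 1, by omega⟩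
  have hii : (i:ℕ) < n + 1 := i.isLt
  constructor
  · intro hik
    have h := key_lemma n k k i (by
      intro j
      rw [succAbove_val]
      split_ifs with h <;> omega)
    simpa using h
  · intro hik
    have hk1 : 1 ≤ k := by omega
    have h := key_lemma n k (k-1) i (by
      intro j
      rw [succAbove_val]
      split_ifs with h <;> omega)
    simpa using h
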